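/- Let a, b, c be positive real numbers and let x_a, x_c be real numbers. Let A = (x_a, a), B = (0, b) and C = (x_c, 2*b - c) be points of the Euclidean plane ℝ². If dist A B = a + b, dist B C = b + c and dist A C = a + c, then c = b^2 / (4*a). -/

import Mathlib

/-!
By Pythagoras, two externally tangent circles of radii `r`, `s` whose centres differ in height
by `r - s` (both tangent to the same line) are horizontally `2√(rs)` apart. Hence `x_a² = 4ab`
and `x_c² = 4bc`, and the tangency of `α` and `γ` then reduces to `x_a x_c = 2b²`. Squaring
this gives `16ab²c = 4b⁴`.
-/

theorem EuclideanSpace.dist_sq_of_ofLp_eq_pair {P Q : EuclideanSpace ℝ (Fin 2)} {x y x' y' : ℝ}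
    (hP : P.ofLp = ![x, y]) (hQ : Q.ofLp = ![x', y']) :
    dist P Q ^ 2 = (x - x') ^ 2 + (y - y') ^ 2 := by
  rw [EuclideanSpace.dist_eq, Real.sq_sqrt (by positivity)]
  simp [Fin.sum_univ_two, Real.dist_eq, sq_abs, hP, hQ]

theorem four_mul_mul_eq_sq_of_tangent_circles {a b c x_a x_c : ℝ} (hb : b ≠ 0)
    (hAB : x_a ^ 2 + (a - b) ^ 2 = (a + b) ^ 2)
    (hBC : x_c ^ 2 + (b - (2 * b - c)) ^ 2 = (b + c) ^ 2)
    (hAC : (x_a - x_c) ^ 2 + (a - (2 * b - c)) ^ 2 = (a + c) ^ 2) :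
    4 * a * c = b ^ 2 := by
  have hxa : x_a ^ 2 = 4 * a * b := by linear_combination hAB
  have hxc : x_c ^ 2 = 4 * b * c := by linear_combination hBC
  have hprod : x_a * x_c = 2 * b ^ 2 := by linear_combination (hxa + hxc - hAC) / 2
  have key : b ^ 2 * (4 * a * c - b ^ 2) = 0 := by
    linear_combination ((x_a * x_c + 2 * b ^ 2) * hprod - 4 * b * c * hxa - x_a ^ 2 * hxc) / 4
  simpa [hb, sub_eq_zero] using key

theorem stmt_0_general (a b c x_a x_c : ℝ) (hb : 0 < b)
    (A : EuclideanSpace ℝ (Fin 2)) (B : EuclideanSpace ℝ (Fin 2))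
    (C : EuclideanSpace ℝ (Fin 2))
    (hA : A = ![x_a, a]) (hB : B = ![0, b]) (hC : C = ![x_c, 2*b - c])
    (hAB : dist A B = a + b) (hBC : dist B C = b + c) (hAC : dist A C = a + c) :
    c = b^2 / (4*a) := by
  have hAB' := EuclideanSpace.dist_sq_of_ofLp_eq_pair hA hB
  have hBC' := EuclideanSpace.dist_sq_of_ofLp_eq_pair hB hC
  have hAC' := EuclideanSpace.dist_sq_of_ofLp_eq_pair hA hC
  rw [hAB, sub_zero] at hAB'
  rw [hBC, zero_sub, neg_sq] at hBC'
  rw [hAC] at hAC'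
  have hac : 4 * a * c = b ^ 2 :=
    four_mul_mul_eq_sq_of_tangent_circles hb.ne' hAB'.symm hBC'.symm hAC'.symm
  have ha : 4 * a ≠ 0 := by
    rintro h
    rw [h, zero_mul] at hac
    exact pow_ne_zero 2 hb.ne' hac.symm
  rw [eq_div_iff ha, ← hac]
  ring

theorem stmt_0 (a b c x_a x_c : ℝ) (ha : 0 < a) (hb : 0 < b) (hc : 0 < c)
    (A : EuclideanSpace ℝ (Fin 2)) (B : EuclideanSpace ℝ (Fin 2))
    (C : EuclideanSpace ℝ (Fin 2))
    (hA : A = ![x_a, a]) (hB : B = ![0, b]) (hC : C = ![x_c, 2*b - c])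
    (hAB : dist A B = a + b) (hBC : dist B C = b + c) (hAC : dist A C = a + c) :
    c = b^2 / (4*a) :=
  stmt_0_general a b c x_a x_c hb A B C hA hB hC hAB hBC hAC
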